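/- arXiv:2003.08779 — 2 statements merged into one kernel-verified Lean document; each statement's English description precedes it below -/
import Mathlib

section
/- Let G be a connected simple graph with α(G) = 3. If G contains a 6-cycle x₁, y₁, x₂, y₂, x₃, y₃, x₁ such that both {x₁, x₂, x₃} and {y₁, y₂, y₃} are independent sets of G, then pc_opt(G) ≤ 4. -/
/-!
Recolour the three edges `xᵢyᵢ` with a new colour `2`, at cost `3 + 1`. Every arc of the hexagon
is then properly coloured. Since `α(G) = 3`, the independent triples `{xᵢ}` and `{yᵢ}` are
maximal, so every vertex off the hexagon has a neighbour `xᵢ` and a neighbour `yⱼ`, joined to it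
by colour-`1` edges. Entering the hexagon at `xᵢ` and walking in the direction `xᵢ → yᵢ` reaches
every hexagon vertex properly, and also every vertex `w` off the hexagon, by leaving at a
neighbour `yⱼ` of `w` right after the colour-`2` edge `xⱼyⱼ`. The length `6` plays no role: an
even cycle of length `2m` whose two colour classes both dominate the remaining vertices gives
`pc_opt ≤ m + 1`.
-/

/-- A set of vertices is independent: pairwise nonadjacent. -/
def IndepSet {V : Type*} (G : SimpleGraph V) (s : Set V) : Prop :=
  s.Pairwise fun u v => ¬ G.Adj u v

/-- The independence number of a graph: the maximum size of an independent set. -/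
noncomputable def indepNum {V : Type*} (G : SimpleGraph V) : ℕ :=
  sSup {n | ∃ t : Finset V, IndepSet G ↑t ∧ t.card = n}

/-- An edge-colored graph is properly connected if between every pair of distinct
vertices there is a path in which no two consecutive edges have the same color. -/
def ProperlyConnected {V : Type*} (G : SimpleGraph V) (c : Sym2 V → ℕ) : Prop :=
  ∀ u v : V, u ≠ v → ∃ p : G.Walk u v, p.IsPath ∧ (p.edges.map c).Chain' (· ≠ ·)

/-- The optimal proper connection number of a monochromatic graph `G` (all edges
initially colored `1`): the minimum of `p + q` over all final colorings `c` making
`G` properly connected, where `p` is the number of recolored edges (edges whose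
color is no longer `1`) and `q` is the number of distinct new colors used. -/
noncomputable def pcOpt {V : Type*} (G : SimpleGraph V) : ℕ :=
  sInf {n | ∃ c : Sym2 V → ℕ, ProperlyConnected G c ∧
    n = {e | e ∈ G.edgeSet ∧ c e ≠ 1}.ncard
      + (c '' {e | e ∈ G.edgeSet ∧ c e ≠ 1}).ncard}

/-- The degree of a vertex. -/
noncomputable def vdeg {V : Type*} (G : SimpleGraph V) (v : V) : ℕ :=
  (G.neighborSet v).ncard

/-- The maximum degree of a graph. -/
noncomputable def maxDeg {V : Type*} (G : SimpleGraph V) : ℕ :=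
  sSup {n | ∃ v, vdeg G v = n}

/-- A connected graph is α-minimal if every vertex is either a cut-vertex or its
deletion decreases the independence number. -/
def AlphaMinimal {V : Type*} (G : SimpleGraph V) : Prop :=
  G.Connected ∧ ∀ v : V,
    ¬ (G.induce ({v}ᶜ : Set V)).Connected ∨
      indepNum (G.induce ({v}ᶜ : Set V)) < indepNum G

section ProperPaths

variable {V : Type*} {G : SimpleGraph V}

def HasProperPath (G : SimpleGraph V) (c : Sym2 V → ℕ) (u v : V) : Prop :=
  ∃ p : G.Walk u v, p.IsPath ∧ (p.edges.map c).IsChain (· ≠ ·)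

theorem HasProperPath.symm {c : Sym2 V → ℕ} {u v : V} (h : HasProperPath G c u v) :
    HasProperPath G c v u := by
  obtain ⟨p, hp, hc⟩ := h
  refine ⟨p.reverse, hp.reverse, ?_⟩
  rw [SimpleGraph.Walk.edges_reverse, List.map_reverse, List.isChain_reverse]
  exact hc.imp fun _ _ h e => h e.symm

def seqWalk (f : ℕ → V) : (k : ℕ) → (∀ j < k, G.Adj (f j) (f (j + 1))) → G.Walk (f 0) (f k)
  | 0, _ => .nil
  | k + 1, h => (seqWalk f k fun j hj => h j (by omega)).concat (h k (by omega))

theorem support_seqWalk (f : ℕ → V) (k : ℕ) (h : ∀ j < k, G.Adj (f j) (f (j + 1))) :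
    (seqWalk f k h).support = (List.range (k + 1)).map f := by
  induction k with
  | zero => rfl
  | succ k ih => simp [seqWalk, ih, List.range_succ]

theorem edges_seqWalk (f : ℕ → V) (k : ℕ) (h : ∀ j < k, G.Adj (f j) (f (j + 1))) :
    (seqWalk f k h).edges = (List.range k).map fun j => s(f j, f (j + 1)) := by
  induction k with
  | zero => rfl
  | succ k ih => simp [seqWalk, ih, List.range_succ]

structure IsProperSeq (G : SimpleGraph V) (c : Sym2 V → ℕ) (g : ℕ → V) (k : ℕ) : Prop where
  adj : ∀ j < k, G.Adj (g j) (g (j + 1))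
  injOn : Set.InjOn g (Set.Iic k)
  color_ne : ∀ j, j + 2 ≤ k → c s(g j, g (j + 1)) ≠ c s(g (j + 1), g (j + 2))

namespace IsProperSeq

variable {c : Sym2 V → ℕ} {g : ℕ → V} {k : ℕ}

theorem hasProperPath (h : IsProperSeq G c g k) : HasProperPath G c (g 0) (g k) := by
  refine ⟨seqWalk g k h.adj, ?_, ?_⟩
  · rw [SimpleGraph.Walk.isPath_def, support_seqWalk]
    refine List.Nodup.map_on (fun i hi j hj hij => h.injOn ?_ ?_ hij) List.nodup_range <;>
      simp_all
  · rw [edges_seqWalk, List.map_map, List.isChain_map]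
    cases k with
    | zero => simp
    | succ k => exact (List.isChain_range_succ _ k).2 fun j hj => h.color_ne j (by omega)

theorem cons (h : IsProperSeq G c g k) {u : V} (hadj : G.Adj u (g 0)) (hu : ∀ t ≤ k, g t ≠ u)
    (hcol : 1 ≤ k → c s(u, g 0) ≠ c s(g 0, g 1)) :
    IsProperSeq G c (fun t => if t = 0 then u else g (t - 1)) (k + 1) where
  adj := by
    rintro (_ | t) ht
    · simpa using hadj
    · simpa using h.adj t (by omega)
  injOn := by
    rintro (_ | s) hs (_ | t) ht hst <;> simp only [Set.mem_Iic] at hs ht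
    · rfl
    · exact absurd (by simpa using hst.symm) (hu t (by omega))
    · exact absurd (by simpa using hst) (hu s (by omega))
    · simpa using h.injOn (by simp; omega) (by simp; omega) (by simpa using hst)
  color_ne := by
    rintro (_ | j) hj
    · simpa using hcol (by omega)
    · simpa using h.color_ne j (by omega)

theorem snoc (h : IsProperSeq G c g k) {v : V} (hadj : G.Adj (g k) v) (hv : ∀ t ≤ k, g t ≠ v)
    (hcol : ∀ j, j + 1 = k → c s(g j, g k) ≠ c s(g k, v)) :
    IsProperSeq G c (fun t => if t ≤ k then g t else v) (k + 1) where
  adj t ht := by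
    obtain ht | rfl : t < k ∨ t = k := by omega
    · simpa [ht.le, ht] using h.adj t ht
    · simpa using hadj
  injOn s hs t ht hst := by
    simp only [Set.mem_Iic] at hs ht
    dsimp only at hst
    split_ifs at hst with h₁ h₂ h₂
    · exact h.injOn h₁ h₂ hst
    · exact absurd hst (hv s h₁)
    · exact absurd hst.symm (hv t h₂)
    · omega
  color_ne j hj := by
    obtain hj | rfl : j + 2 ≤ k ∨ j + 1 = k := by omega
    · simpa [hj, (by omega : j ≤ k), (by omega : j + 1 ≤ k)] using h.color_ne j hj
    · simpa using hcol j rfl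

end IsProperSeq

/-- `f` runs periodically around a cycle `f 0, f 1, …, f (2 * m - 1)` of `G`. -/
structure IsEvenCycle (G : SimpleGraph V) (f : ℕ → V) (m : ℕ) : Prop where
  one_lt : 1 < m
  periodic : Function.Periodic f (2 * m)
  injOn : Set.InjOn f (Set.Iio (2 * m))
  adj : ∀ j, G.Adj (f j) (f (j + 1))

open Classical in
noncomputable def matchingColoring (f : ℕ → V) (e : Sym2 V) : ℕ :=
  if ∃ j, Even j ∧ e = s(f j, f (j + 1)) then 2 else 1

theorem matchingColoring_of_notMem_range {f : ℕ → V} {u : V} (hu : u ∉ Set.range f) (w : V) :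
    matchingColoring f s(u, w) = 1 := by
  rw [matchingColoring, if_neg]
  rintro ⟨j, -, he⟩
  rcases Sym2.eq_iff.1 he with ⟨h, -⟩ | ⟨h, -⟩ <;> exact hu ⟨_, h.symm⟩

namespace IsEvenCycle

variable {f : ℕ → V} {m : ℕ}

theorem apply_eq_apply_iff (hC : IsEvenCycle G f m) {i j : ℕ} :
    f i = f j ↔ i ≡ j [MOD 2 * m] := by
  have hpos : 0 < 2 * m := by have := hC.one_lt; omega
  rw [← hC.periodic.map_mod_nat i, ← hC.periodic.map_mod_nat j]
  exact hC.injOn.eq_iff (Nat.mod_lt _ hpos) (Nat.mod_lt _ hpos)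

theorem even_iff_of_apply_eq (hC : IsEvenCycle G f m) {i j : ℕ} (h : f i = f j) :
    Even i ↔ Even j := by
  have h2 : i % 2 = j % 2 := (hC.apply_eq_apply_iff.1 h).of_mul_right m
  rw [Nat.even_iff, Nat.even_iff, h2]

theorem injOn_add (hC : IsEvenCycle G f m) (i : ℕ) :
    Set.InjOn (fun t => f (i + t)) (Set.Iio (2 * m)) := fun _ hs _ ht h =>
  ((hC.apply_eq_apply_iff.1 h).add_left_cancel' i).eq_of_lt_of_lt hs ht

theorem exists_lt_apply_add_eq (hC : IsEvenCycle G f m) (i j : ℕ) :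
    ∃ k < 2 * m, f (i + k) = f j := by
  have : NeZero (2 * m) := ⟨by have := hC.one_lt; omega⟩
  refine ⟨((j - i : ZMod (2 * m))).val, ZMod.val_lt _, hC.apply_eq_apply_iff.2 ?_⟩
  rw [← ZMod.natCast_eq_natCast_iff]
  simp

theorem matchingColoring_apply (hC : IsEvenCycle G f m) (j : ℕ) :
    matchingColoring f s(f j, f (j + 1)) = if Even j then 2 else 1 := by
  by_cases hj : Even j
  · rw [matchingColoring, if_pos ⟨j, hj, rfl⟩, if_pos hj]
  rw [matchingColoring, if_neg, if_neg hj]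
  rintro ⟨i, hi, he⟩
  rcases Sym2.eq_iff.1 he with ⟨h, -⟩ | ⟨h₁, h₂⟩
  · exact hj ((hC.even_iff_of_apply_eq h).2 hi)
  -- the edge would be traversed both ways, forcing `2 * m ∣ 2`
  have h : j + 2 ≡ j + 0 [MOD 2 * m] :=
    ((hC.apply_eq_apply_iff.1 h₂).add_right 1).trans (hC.apply_eq_apply_iff.1 h₁).symm
  have := Nat.le_of_dvd two_pos ((Nat.modEq_zero_iff_dvd).1 (h.add_left_cancel' j))
  have := hC.one_lt
  omega

theorem matchingColoring_ne (hC : IsEvenCycle G f m) (j : ℕ) :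
    matchingColoring f s(f j, f (j + 1)) ≠ matchingColoring f s(f (j + 1), f (j + 1 + 1)) := by
  rw [hC.matchingColoring_apply, hC.matchingColoring_apply]
  by_cases hj : Even j <;> simp [hj, Nat.even_add_one]

theorem matchingColoring_entry_ne (hC : IsEvenCycle G f m) {u : V} (hu : u ∉ Set.range f)
    {i : ℕ} (hi : Even i) :
    matchingColoring f s(u, f i) ≠ matchingColoring f s(f i, f (i + 1)) := by
  simp [hC.matchingColoring_apply, hi, matchingColoring_of_notMem_range hu]

theorem matchingColoring_exit_ne (hC : IsEvenCycle G f m) {v : V} (hv : v ∉ Set.range f)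
    {j : ℕ} (hj : Even j) :
    matchingColoring f s(f j, f (j + 1)) ≠ matchingColoring f s(f (j + 1), v) := by
  rw [Sym2.eq_swap (a := f (j + 1)), matchingColoring_of_notMem_range hv,
    hC.matchingColoring_apply, if_pos hj]
  decide

theorem isProperSeq_add (hC : IsEvenCycle G f m) (i : ℕ) {k : ℕ} (hk : k < 2 * m) :
    IsProperSeq G (matchingColoring f) (fun t => f (i + t)) k where
  adj t _ := hC.adj (i + t)
  injOn := (hC.injOn_add i).mono fun t ht => by simp_all; omega
  color_ne t _ := by simpa [add_assoc] using hC.matchingColoring_ne (i + t)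

theorem hasProperPath_apply_apply (hC : IsEvenCycle G f m) (i j : ℕ) :
    HasProperPath G (matchingColoring f) (f i) (f j) := by
  obtain ⟨k, hk, hkj⟩ := hC.exists_lt_apply_add_eq i j
  simpa [hkj] using (hC.isProperSeq_add i hk).hasProperPath

theorem hasProperPath_of_notMem_range (hC : IsEvenCycle G f m) {u : V} (hu : u ∉ Set.range f)
    {i : ℕ} (hi : Even i) (hui : G.Adj u (f i)) (j : ℕ) :
    HasProperPath G (matchingColoring f) u (f j) := by
  obtain ⟨k, hk, hkj⟩ := hC.exists_lt_apply_add_eq i j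
  simpa [hkj] using ((hC.isProperSeq_add i hk).cons hui (fun t _ h => hu ⟨_, h⟩)
    fun _ => hC.matchingColoring_entry_ne hu hi).hasProperPath

theorem hasProperPath_of_notMem_range_of_notMem_range (hC : IsEvenCycle G f m) {u v : V}
    (hu : u ∉ Set.range f) (hv : v ∉ Set.range f) (huv : u ≠ v) {i j : ℕ} (hi : Even i)
    (hj : Odd j) (hui : G.Adj u (f i)) (hvj : G.Adj v (f j)) :
    HasProperPath G (matchingColoring f) u v := by
  obtain ⟨k, hk, hkj⟩ := hC.exists_lt_apply_add_eq i j
  have hik : Odd (i + k) := by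
    rw [← Nat.not_even_iff_odd, hC.even_iff_of_apply_eq hkj, Nat.not_even_iff_odd]; exact hj
  -- `i` is even and `i + k` odd, so the arc `f i, …, f (i + k)` ends with a colour-`2` edge
  obtain ⟨k, rfl⟩ : ∃ k', k = k' + 1 :=
    Nat.exists_eq_add_one_of_ne_zero fun hk0 => by simp_all [← Nat.not_even_iff_odd]
  have he : Even (i + k) := by simpa [← add_assoc, Nat.odd_add_one] using hik
  have hseq := ((hC.isProperSeq_add i hk).cons hui (fun t _ h => hu ⟨_, h⟩)
    fun _ => hC.matchingColoring_entry_ne hu hi).snoc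
    (v := v) (by simpa [hkj] using hvj.symm) (by rintro (_ | t) - h <;> simp_all) ?_
  · simpa using hseq.hasProperPath
  · intro j hj
    obtain rfl : j = k + 1 := by omega
    simpa [add_assoc] using hC.matchingColoring_exit_ne hv he

theorem properlyConnected_matchingColoring (hC : IsEvenCycle G f m)
    (hdom : ∀ u ∉ Set.range f, (∃ i, Even i ∧ G.Adj u (f i)) ∧ ∃ j, Odd j ∧ G.Adj u (f j)) :
    ProperlyConnected G (matchingColoring f) := by
  intro u v huv
  by_cases hu : u ∈ Set.range f <;> by_cases hv : v ∈ Set.range f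
  · obtain ⟨i, rfl⟩ := hu
    obtain ⟨j, rfl⟩ := hv
    exact hC.hasProperPath_apply_apply i j
  · obtain ⟨i, rfl⟩ := hu
    obtain ⟨⟨j, hj, hvj⟩, -⟩ := hdom v hv
    exact (hC.hasProperPath_of_notMem_range hv hj hvj i).symm
  · obtain ⟨j, rfl⟩ := hv
    obtain ⟨⟨i, hi, hui⟩, -⟩ := hdom u hu
    exact hC.hasProperPath_of_notMem_range hu hi hui j
  · obtain ⟨⟨i, hi, hui⟩, -⟩ := hdom u hu
    obtain ⟨-, ⟨j, hj, hvj⟩⟩ := hdom v hv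
    exact hC.hasProperPath_of_notMem_range_of_notMem_range hu hv huv hi hj hui hvj

theorem setOf_matchingColoring_ne_one_subset (hC : IsEvenCycle G f m) :
    {e | e ∈ G.edgeSet ∧ matchingColoring f e ≠ 1} ⊆
      (fun i => s(f (2 * i), f (2 * i + 1))) '' Set.Iio m := by
  rintro e ⟨-, he⟩
  rw [matchingColoring] at he
  split_ifs at he with h
  · obtain ⟨j, ⟨i, rfl⟩, rfl⟩ := h
    have hmod : 2 * (i % m) ≡ i + i [MOD 2 * m] := by
      rw [← two_mul]; exact (Nat.mod_modEq i m).mul_left' 2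
    refine ⟨i % m, Nat.mod_lt _ (by have := hC.one_lt; omega), ?_⟩
    dsimp only
    rw [hC.apply_eq_apply_iff.2 hmod, hC.apply_eq_apply_iff.2 (hmod.add_right 1)]
  · exact absurd rfl he

theorem pcOpt_le (hC : IsEvenCycle G f m)
    (hdom : ∀ u ∉ Set.range f, (∃ i, Even i ∧ G.Adj u (f i)) ∧ ∃ j, Odd j ∧ G.Adj u (f j)) :
    pcOpt G ≤ m + 1 := by
  set S := {e | e ∈ G.edgeSet ∧ matchingColoring f e ≠ 1}
  have hS : S.ncard ≤ m := by
    refine (Set.ncard_le_ncard hC.setOf_matchingColoring_ne_one_subset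
      ((Set.finite_Iio m).image _)).trans ?_
    refine (Set.ncard_image_le (Set.finite_Iio m)).trans ?_
    rw [← Finset.coe_range, Set.ncard_coe_finset, Finset.card_range]
  have hcolors : (matchingColoring f '' S).ncard ≤ 1 := by
    refine (Set.ncard_le_ncard ?_ (Set.finite_singleton 2)).trans (Set.ncard_singleton 2).le
    rintro _ ⟨e, ⟨-, he⟩, rfl⟩
    rw [matchingColoring] at he ⊢
    split_ifs at he ⊢ <;> simp_all
  calc pcOpt G ≤ S.ncard + (matchingColoring f '' S).ncard :=
        Nat.sInf_le ⟨_, hC.properlyConnected_matchingColoring hdom, rfl⟩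
    _ ≤ m + 1 := by omega

end IsEvenCycle

theorem IndepSet.card_le_indepNum {s : Finset V} (hs : IndepSet G s) (h : indepNum G ≠ 0) :
    s.card ≤ indepNum G := by
  -- an unbounded set of sizes would have `sSup = 0` in `ℕ`
  have hbdd : BddAbove {n | ∃ t : Finset V, IndepSet G ↑t ∧ t.card = n} := by
    by_contra hb
    exact h (Nat.sSup_of_not_bddAbove hb)
  exact le_csSup hbdd ⟨s, hs, rfl⟩

theorem IndepSet.exists_adj_of_indepNum_eq_card {s : Finset V} (hs : IndepSet G s)
    (hα : indepNum G = s.card) (hne : s.Nonempty) {u : V} (hu : u ∉ s) : ∃ x ∈ s, G.Adj u x := by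
  classical
  by_contra! h
  have hins : IndepSet G ↑(insert u s) := by
    rw [Finset.coe_insert]
    exact Set.Pairwise.insert hs fun x hx _ => ⟨h x hx, fun h' => h x hx h'.symm⟩
  have := hins.card_le_indepNum (by rw [hα]; exact hne.card_pos.ne')
  rw [Finset.card_insert_of_notMem hu, hα] at this
  omega

theorem IndepSet.adj_or_adj_or_adj_of_indepNum_eq_three (hα : indepNum G = 3) {a b c : V}
    (hind : IndepSet G {a, b, c}) (hab : a ≠ b) (hac : a ≠ c) (hbc : b ≠ c) {u : V}
    (hua : u ≠ a) (hub : u ≠ b) (huc : u ≠ c) : G.Adj u a ∨ G.Adj u b ∨ G.Adj u c := by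
  classical
  obtain ⟨x, hx, hux⟩ := IndepSet.exists_adj_of_indepNum_eq_card (s := {a, b, c})
    (by simpa using hind)
    (by rw [hα, eq_comm, Finset.card_eq_three]; exact ⟨a, b, c, hab, hac, hbc, rfl⟩)
    (by simp) (u := u) (by simp [hua, hub, huc])
  simp only [Finset.mem_insert, Finset.mem_singleton] at hx
  rcases hx with rfl | rfl | rfl <;> simp [hux]

open Fin.NatCast in
theorem isEvenCycle_hexagon {x₁ y₁ x₂ y₂ x₃ y₃ : V}
    (hnodup : ([x₁, y₁, x₂, y₂, x₃, y₃] : List V).Nodup)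
    (e₁ : G.Adj x₁ y₁) (e₂ : G.Adj y₁ x₂) (e₃ : G.Adj x₂ y₂)
    (e₄ : G.Adj y₂ x₃) (e₅ : G.Adj x₃ y₃) (e₆ : G.Adj y₃ x₁) :
    IsEvenCycle G (fun j : ℕ => ![x₁, y₁, x₂, y₂, x₃, y₃] (j : Fin 6)) 3 where
  one_lt := by norm_num
  periodic j := by simp
  injOn i hi j hj h := by
    have hij := congrArg Fin.val (List.nodup_ofFn.1 (by simpa using hnodup) h)
    simp only [Fin.val_natCast] at hij
    simp only [Set.mem_Iio] at hi hj
    omega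
  adj j := by
    have key : ∀ t : Fin 6,
        G.Adj (![x₁, y₁, x₂, y₂, x₃, y₃] t) (![x₁, y₁, x₂, y₂, x₃, y₃] (t + 1)) := by
      intro t
      fin_cases t
      exacts [e₁, e₂, e₃, e₄, e₅, e₆]
    simpa using key (j : Fin 6)

end ProperPaths

theorem pcOpt_le_four_of_six_cycle_general {V : Type*} (G : SimpleGraph V)
    (hα : indepNum G = 3)
    (x₁ y₁ x₂ y₂ x₃ y₃ : V)
    (hnodup : ([x₁, y₁, x₂, y₂, x₃, y₃] : List V).Nodup)
    (e₁ : G.Adj x₁ y₁) (e₂ : G.Adj y₁ x₂) (e₃ : G.Adj x₂ y₂)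
    (e₄ : G.Adj y₂ x₃) (e₅ : G.Adj x₃ y₃) (e₆ : G.Adj y₃ x₁)
    (hx : IndepSet G {x₁, x₂, x₃}) (hy : IndepSet G {y₁, y₂, y₃}) :
    pcOpt G ≤ 4 := by
  refine (isEvenCycle_hexagon hnodup e₁ e₂ e₃ e₄ e₅ e₆).pcOpt_le fun u hu => ?_
  simp only [List.nodup_cons, List.mem_cons, List.not_mem_nil, or_false, List.nodup_nil,
    and_true, not_or] at hnodup
  obtain ⟨⟨-, h13, -, h15, -⟩, ⟨-, h24, -, h26⟩, ⟨-, h35, -⟩, ⟨-, h46⟩, -⟩ := hnodup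
  have hne (j : ℕ) : u ≠ ![x₁, y₁, x₂, y₂, x₃, y₃] (Fin.ofNat 6 j) := fun h => hu ⟨j, h.symm⟩
  constructor
  · rcases hx.adj_or_adj_or_adj_of_indepNum_eq_three hα h13 h15 h35 (hne 0) (hne 2) (hne 4)
      with h | h | h
    exacts [⟨0, by decide, h⟩, ⟨2, by decide, h⟩, ⟨4, by decide, h⟩]
  · rcases hy.adj_or_adj_or_adj_of_indepNum_eq_three hα h24 h26 h46 (hne 1) (hne 3) (hne 5)
      with h | h | h
    exacts [⟨1, by decide, h⟩, ⟨3, by decide, h⟩, ⟨5, by decide, h⟩]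

/-- If `G` is connected with `α(G) = 3` and has a 6-cycle
`x₁, y₁, x₂, y₂, x₃, y₃, x₁` such that both `{x₁, x₂, x₃}` and `{y₁, y₂, y₃}`
are independent sets of `G`, then `pc_opt(G) ≤ 4`. -/
theorem pcOpt_le_four_of_six_cycle {V : Type*} [Fintype V] (G : SimpleGraph V)
    (hG : G.Connected) (hα : indepNum G = 3)
    (x₁ y₁ x₂ y₂ x₃ y₃ : V)
    (hnodup : ([x₁, y₁, x₂, y₂, x₃, y₃] : List V).Nodup)
    (e₁ : G.Adj x₁ y₁) (e₂ : G.Adj y₁ x₂) (e₃ : G.Adj x₂ y₂)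
    (e₄ : G.Adj y₂ x₃) (e₅ : G.Adj x₃ y₃) (e₆ : G.Adj y₃ x₁)
    (hx : IndepSet G {x₁, x₂, x₃}) (hy : IndepSet G {y₁, y₂, y₃}) :
    pcOpt G ≤ 4 :=
  pcOpt_le_four_of_six_cycle_general G hα x₁ y₁ x₂ y₂ x₃ y₃ hnodup e₁ e₂ e₃ e₄ e₅ e₆ hx hy
end

section
/- For every integer m ≥ 2, the star K_{1,m} satisfies pc_opt(K_{1,m}) = 2m − 2 = 2·α(K_{1,m}) − 2. -/
/-!
In `K_{1,m}` the only path between two leaves runs through the centre, so a colouring properly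
connects the star exactly when its `m` edges receive pairwise distinct colours. Then at most one
edge keeps colour `1`, and the at least `m - 1` recoloured edges need as many new colours, giving
`p + q ≥ 2m - 2`; colouring the edge of leaf `i` with `i` attains this bound.
-/

section General

variable {V : Type*}

def recoloredEdges (G : SimpleGraph V) (c : Sym2 V → ℕ) : Set (Sym2 V) :=
  {e | e ∈ G.edgeSet ∧ c e ≠ 1}

noncomputable def recolorCost (G : SimpleGraph V) (c : Sym2 V → ℕ) : ℕ :=
  (recoloredEdges G c).ncard + (c '' recoloredEdges G c).ncard

theorem pcOpt_eq_of_le {G : SimpleGraph V} {n : ℕ} {c₀ : Sym2 V → ℕ}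
    (hc₀ : ProperlyConnected G c₀) (hcost : recolorCost G c₀ ≤ n)
    (hle : ∀ c, ProperlyConnected G c → n ≤ recolorCost G c) : pcOpt G = n := by
  have hmem : recolorCost G c₀ ∈ {n | ∃ c, ProperlyConnected G c ∧ n = recolorCost G c} :=
    ⟨c₀, hc₀, rfl⟩
  refine le_antisymm ((Nat.sInf_le hmem).trans hcost) (le_csInf ⟨_, hmem⟩ ?_)
  rintro _ ⟨c, hc, rfl⟩
  exact hle c hc

theorem indepNum_eq_of_le {G : SimpleGraph V} {t : Finset V} (ht : IndepSet G t)
    (hle : ∀ s : Finset V, IndepSet G s → s.card ≤ t.card) : indepNum G = t.card := by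
  have hbdd : ∀ n ∈ {n | ∃ s : Finset V, IndepSet G s ∧ s.card = n}, n ≤ t.card := by
    rintro _ ⟨s, hs, rfl⟩
    exact hle s hs
  exact le_antisymm (csSup_le ⟨_, t, ht, rfl⟩ hbdd) (le_csSup ⟨_, hbdd⟩ ⟨t, ht, rfl⟩)

theorem recolorCost_of_injOn {G : SimpleGraph V} {c : Sym2 V → ℕ}
    (hc : Set.InjOn c G.edgeSet) :
    recolorCost G c = 2 * (recoloredEdges G c).ncard := by
  rw [recolorCost, (hc.mono fun _ he => he.1).ncard_image]
  ring

theorem ncard_edgeSet_sub_one_le_ncard_recoloredEdges [Finite V] {G : SimpleGraph V}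
    {c : Sym2 V → ℕ} (hc : Set.InjOn c G.edgeSet) :
    G.edgeSet.ncard - 1 ≤ (recoloredEdges G c).ncard := by
  set kept := {e | e ∈ G.edgeSet ∧ c e = 1}
  have hkept : kept.ncard ≤ 1 :=
    (Set.ncard_le_one_iff).mpr fun ha hb => hc ha.1 hb.1 (ha.2.trans hb.2.symm)
  calc G.edgeSet.ncard - 1 ≤ G.edgeSet.ncard - kept.ncard := by omega
    _ ≤ (G.edgeSet \ kept).ncard := Set.le_ncard_sdiff _ _
    _ ≤ (recoloredEdges G c).ncard :=
      Set.ncard_le_ncard fun e ⟨he, hne⟩ => ⟨he, fun h => hne ⟨he, h⟩⟩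

end General

def starGraph (m : ℕ) : SimpleGraph (Fin (m + 1)) :=
  SimpleGraph.fromRel fun u _ => u = 0

section Star

variable {m : ℕ}

theorem starGraph_adj {u v : Fin (m + 1)} :
    (starGraph m).Adj u v ↔ u ≠ v ∧ (u = 0 ∨ v = 0) :=
  SimpleGraph.fromRel_adj _ _ _

theorem eq_zero_of_starGraph_adj {u v : Fin (m + 1)} (h : (starGraph m).Adj u v) (hu : u ≠ 0) :
    v = 0 :=
  (starGraph_adj.mp h).2.resolve_left hu

theorem edgeSet_starGraph : (starGraph m).edgeSet = (fun i => s(0, i)) '' {0}ᶜ := by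
  ext e
  constructor
  · induction e using Sym2.ind with
    | _ u v =>
      rintro ⟨huv, rfl | rfl⟩
      · exact ⟨v, huv.symm, rfl⟩
      · exact ⟨u, huv, Sym2.eq_swap⟩
  · rintro ⟨i, hi, rfl⟩
    exact starGraph_adj.mpr ⟨Ne.symm hi, Or.inl rfl⟩

theorem ncard_edgeSet_starGraph : (starGraph m).edgeSet.ncard = m := by
  rw [edgeSet_starGraph, Set.ncard_image_of_injective _ fun _ _ => Sym2.congr_right.mp,
    Set.ncard_compl, Set.ncard_singleton, Nat.card_eq_fintype_card, Fintype.card_fin]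
  simp

theorem edges_eq_of_isPath_starGraph {i j : Fin (m + 1)} (hi : i ≠ 0) (hj : j ≠ 0)
    (hij : i ≠ j) {p : (starGraph m).Walk i j} (hp : p.IsPath) :
    p.edges = [s(i, 0), s(0, j)] := by
  cases p with
  | nil => exact absurd rfl hij
  | cons h q =>
    obtain rfl := eq_zero_of_starGraph_adj h hi
    cases q with
    | nil => exact absurd rfl hj
    | cons h' r =>
      cases r with
      | nil => rfl
      | cons h'' s =>
        obtain rfl := eq_zero_of_starGraph_adj h'' h'.ne.symm
        simpa using hp.support_nodup

theorem properlyConnected_starGraph_iff {c : Sym2 (Fin (m + 1)) → ℕ} :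
    ProperlyConnected (starGraph m) c ↔ Set.InjOn c (starGraph m).edgeSet := by
  constructor
  · rw [edgeSet_starGraph]
    rintro hc _ ⟨i, hi, rfl⟩ _ ⟨j, hj, rfl⟩ hcij
    by_contra hne
    have hij : i ≠ j := by rintro rfl; exact hne rfl
    obtain ⟨p, hp, hchain⟩ := hc i j hij
    rw [edges_eq_of_isPath_starGraph hi hj hij hp] at hchain
    exact List.rel_of_isChain_cons_cons hchain (by rw [Sym2.eq_swap]; exact hcij)
  · intro hinj u v huv
    by_cases hzero : u = 0 ∨ v = 0
    · have h := starGraph_adj.mpr ⟨huv, hzero⟩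
      exact ⟨h.toWalk, .of_adj h, .singleton _⟩
    · obtain ⟨hu, hv⟩ := not_or.mp hzero
      have h₁ : (starGraph m).Adj u 0 := starGraph_adj.mpr ⟨hu, Or.inr rfl⟩
      have h₂ : (starGraph m).Adj 0 v := starGraph_adj.mpr ⟨Ne.symm hv, Or.inl rfl⟩
      have hne : c s(u, 0) ≠ c s(0, v) := hinj.ne h₁ h₂ (by simp [hu, huv])
      exact ⟨.cons h₁ (.cons h₂ .nil), by simp [hu, huv, Ne.symm hv],
        .cons_cons hne (.singleton _)⟩

def leafColoring (m : ℕ) : Sym2 (Fin (m + 1)) → ℕ :=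
  Sym2.lift ⟨fun u v => u + v, fun _ _ => add_comm _ _⟩

theorem leafColoring_mk_zero (i : Fin (m + 1)) : leafColoring m s(0, i) = i := by
  simp [leafColoring]

theorem injOn_leafColoring : Set.InjOn (leafColoring m) (starGraph m).edgeSet := by
  rw [edgeSet_starGraph]
  refine Set.InjOn.image_of_comp fun i _ j _ hij => Fin.ext ?_
  simpa only [Function.comp_apply, leafColoring_mk_zero] using hij

theorem recoloredEdges_leafColoring :
    recoloredEdges (starGraph m) (leafColoring m) =
      (fun i => s(0, i)) '' {i : Fin (m + 1) | 1 < (i : ℕ)} := by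
  ext e
  simp only [recoloredEdges, edgeSet_starGraph, Set.mem_image, Set.mem_compl_singleton_iff,
    Set.mem_ofPred_eq]
  constructor
  · rintro ⟨⟨i, hi, rfl⟩, h1⟩
    rw [leafColoring_mk_zero] at h1
    exact ⟨i, by have := Fin.val_ne_zero_iff.mpr hi; omega, rfl⟩
  · rintro ⟨i, hi, rfl⟩
    refine ⟨⟨i, ?_, rfl⟩, ?_⟩
    · rintro rfl; simp at hi
    · rw [leafColoring_mk_zero]; omega

theorem ncard_setOf_one_lt_val : {i : Fin (m + 1) | 1 < (i : ℕ)}.ncard = m - 1 := by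
  have himage : Fin.val '' {i : Fin (m + 1) | 1 < (i : ℕ)} = Set.Ioo 1 (m + 1) := by
    ext n
    exact ⟨fun ⟨i, hi, hn⟩ => hn ▸ ⟨hi, i.isLt⟩, fun ⟨h1, h2⟩ => ⟨⟨n, h2⟩, h1, rfl⟩⟩
  rw [← Set.ncard_image_of_injective _ Fin.val_injective, himage, Set.ncard_Ioo_nat]
  omega

theorem recolorCost_leafColoring : recolorCost (starGraph m) (leafColoring m) = 2 * m - 2 := by
  rw [recolorCost_of_injOn injOn_leafColoring, recoloredEdges_leafColoring,
    Set.ncard_image_of_injective _ fun _ _ => Sym2.congr_right.mp, ncard_setOf_one_lt_val]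
  omega

theorem pcOpt_starGraph : pcOpt (starGraph m) = 2 * m - 2 := by
  refine pcOpt_eq_of_le (properlyConnected_starGraph_iff.mpr injOn_leafColoring)
    recolorCost_leafColoring.le fun c hc => ?_
  have hinj := properlyConnected_starGraph_iff.mp hc
  have hrecolored := ncard_edgeSet_sub_one_le_ncard_recoloredEdges hinj
  rw [ncard_edgeSet_starGraph] at hrecolored
  rw [recolorCost_of_injOn hinj]
  omega

theorem indepSet_leaves : IndepSet (starGraph m) ↑(Finset.univ.erase (0 : Fin (m + 1))) :=
  fun _ hu _ hv _ hadj => Finset.ne_of_mem_erase hv (eq_zero_of_starGraph_adj hadj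
    (Finset.ne_of_mem_erase hu))

theorem card_le_of_indepSet_starGraph (hm : 1 ≤ m) {s : Finset (Fin (m + 1))}
    (hs : IndepSet (starGraph m) s) : s.card ≤ m := by
  by_cases h0 : (0 : Fin (m + 1)) ∈ s
  · have hcentre : ∀ v ∈ s, v = 0 := fun v hv => by
      by_contra hv0
      exact hs h0 hv (Ne.symm hv0) (starGraph_adj.mpr ⟨Ne.symm hv0, Or.inl rfl⟩)
    calc s.card ≤ 1 :=
          Finset.card_le_one.mpr fun a ha b hb => (hcentre a ha).trans (hcentre b hb).symm
      _ ≤ m := hm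
  · calc s.card ≤ (Finset.univ.erase (0 : Fin (m + 1))).card :=
          Finset.card_le_card fun v hv =>
            Finset.mem_erase.mpr ⟨fun h => h0 (h ▸ hv), Finset.mem_univ v⟩
      _ = m := by simp

theorem indepNum_starGraph (hm : 1 ≤ m) : indepNum (starGraph m) = m := by
  have hleaves : (Finset.univ.erase (0 : Fin (m + 1))).card = m := by simp
  refine (indepNum_eq_of_le indepSet_leaves fun s hs => ?_).trans hleaves
  exact (card_le_of_indepSet_starGraph hm hs).trans_eq hleaves.symm

end Star

/-- For every `m ≥ 2`, the star `K_{1,m}` (center `0` joined to `m` leaves)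
satisfies `pc_opt(K_{1,m}) = 2m − 2 = 2α(K_{1,m}) − 2`. -/
theorem pcOpt_star (m : ℕ) (hm : 2 ≤ m) :
    pcOpt (SimpleGraph.fromRel (fun u _ : Fin (m + 1) => u = 0)) = 2 * m - 2 ∧
    2 * m - 2 = 2 * indepNum (SimpleGraph.fromRel (fun u _ : Fin (m + 1) => u = 0)) - 2 :=
  ⟨pcOpt_starGraph, (congrArg (2 * · - 2) (indepNum_starGraph (by omega))).symm⟩
end
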